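/- Fix integers k ≥ 1, m ≥ 2k and n ≥ m with n ≥ 2, real constants c₁,…,c_k, real numbers π₁,…,π_{n−k}, and E ∈ ℂ. Set ε̃ = E − ½ Σ_{j=1}^{n−m} π_{n−m+1−j} π_j − Σ_{j=n−⌊m/2⌋+1}^{n−k} π_j π_{2n−m+1−j} − ((m−2⌊m/2⌋)/2) π²_{n−⌊m/2⌋}. Suppose S₀ is a smooth complex-valued function of (r^{n−k+1},…,r^n), defined for rⁿ ≠ 0, satisfying the reduced Hamilton–Jacobi equation Σ_{j=n−k+1}^{n} π_{2n−m+1−j} ∂S₀/∂r^j + Σ_{j=1}^{k} c_j V_1^{(−j)}(φ(r)) = ε̃ (the left-hand side depends only on r^{n−k+1},…,r^n). Then ψ(r) = exp( i ( S₀(r^{n−k+1},…,r^n) + Σ_{j=1}^{n−k} π_j r^j ) ) satisfies ℋ⁻ψ = Eψ and 𝒫_jψ = π_j ψ for all j = 1,…,n−k on the open set {r ∈ ℝⁿ : rⁿ ≠ 0}. -/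

import Mathlib

open Finset Complex

noncomputable section

/-- Component of `v : Fin n → ℝ` with label `t ∈ {1,…,n}` (and `0` otherwise). -/
def get (n : ℕ) (v : Fin n → ℝ) (t : ℕ) : ℝ :=
  if h : 1 ≤ t ∧ t ≤ n then v ⟨t - 1, by omega⟩ else 0

/-- The unit vector in `Fin n → ℝ` with label `i ∈ {1,…,n}`. -/
def evec (n i : ℕ) : Fin n → ℝ := fun t => if (t : ℕ) + 1 = i then 1 else 0

/-- The map `φ : ℝⁿ → ℝⁿ`, `r ↦ q`. -/
def phi (n m : ℕ) (r : Fin n → ℝ) : Fin n → ℝ := fun i =>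
  if (i : ℕ) + 1 ≤ n - m then
    r i + (1/4) * ∑ j ∈ Finset.Icc 1 ((i : ℕ) + 1 - 1), get n r j * get n r ((i : ℕ) + 1 - j)
  else
    -(1/4) * ∑ j ∈ Finset.Icc ((i : ℕ) + 1) n, get n r j * get n r (n - j + ((i : ℕ) + 1))

/-- `φ(r)` extended to all labels, with `q⁰ = 1` and `q^i = 0` for `i > n`. -/
def qe (n m : ℕ) (r : Fin n → ℝ) (t : ℕ) : ℝ :=
  if t = 0 then 1 else get n (phi n m r) t

/-- Basic separable potentials with negative superscript: `Vneg n k r q = V_r^{(-k)}`.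
`V_r^{(-1)} = -q^{r-1}/qⁿ`, `V_r^{(-k-1)} = V_{r-1}^{(-k)} + V_r^{(-1)} V_n^{(-k)}`. -/
def Vneg (n : ℕ) : ℕ → ℕ → (ℕ → ℝ) → ℝ
  | 0, _, _ => 0
  | 1, r, q => -q (r-1) / q n
  | (k+2), r, q => Vneg n (k+1) (r-1) q + (-q (r-1) / q n) * Vneg n (k+1) n q

/-- Second partial derivative `∂²ψ/∂r^a∂r^b` (labels `a, b ∈ {1,…,n}`). -/
def D2 (n : ℕ) (ψ : (Fin n → ℝ) → ℂ) (r : Fin n → ℝ) (a b : ℕ) : ℂ :=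
  fderiv ℝ (fun w => fderiv ℝ ψ w (evec n b)) r (evec n a)

/-- The Schrödinger operator `ℋ⁻ = −½(Σ_{a=1}^{n−m} ∂²/∂r^a∂r^{n−m+1−a} +
Σ_{b=n−m+1}^{n} ∂²/∂r^b∂r^{2n−m+1−b}) + Σ_{j=1}^{k} c_j V_1^{(−j)}(φ(r))`. -/
def Hneg (n m k : ℕ) (c : ℕ → ℝ) (ψ : (Fin n → ℝ) → ℂ) (r : Fin n → ℝ) : ℂ :=
  -(1/2) * (∑ a ∈ Finset.Icc 1 (n - m), D2 n ψ r a (n - m + 1 - a) +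
      ∑ b ∈ Finset.Icc (n - m + 1) n, D2 n ψ r b (2 * n - m + 1 - b)) +
    (∑ j ∈ Finset.Icc 1 k, (c j : ℂ) * (Vneg n j 1 (qe n m r) : ℝ)) * ψ r

lemma get_eq {n t : ℕ} (w : Fin n → ℝ) (h1 : 1 ≤ t) (h2 : t ≤ n) :
    get n w t = w ⟨t - 1, by omega⟩ := dif_pos ⟨h1, h2⟩

/-- if `S₀ = S₀(r^{n−k+1},…,r^n)` (defined and smooth for `rⁿ ≠ 0`)
solves the reduced Hamilton–Jacobi equation, then
`ψ = exp(i(S₀ + Σ_{j=1}^{n−k} π_j r^j))` satisfies `ℋ⁻ψ = Eψ` and `𝒫_jψ = π_jψ` for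
`j = 1,…,n−k` on the open set `rⁿ ≠ 0`. -/
theorem solution_of_Schroedinger_negative_potentials
    (k m n : ℕ) (hk : 1 ≤ k) (hm : 2 * k ≤ m) (hnm : m ≤ n) (hn : 2 ≤ n)
    (c : ℕ → ℝ) (pp : ℕ → ℝ) (E : ℂ) (ε' : ℂ)
    (hε' : ε' = E - ((1/2) * ∑ j ∈ Finset.Icc 1 (n - m), pp (n - m + 1 - j) * pp j : ℝ) -
          (∑ j ∈ Finset.Icc (n - m / 2 + 1) (n - k), pp j * pp (2 * n - m + 1 - j) : ℝ) -
          (((m - 2 * (m / 2) : ℕ) : ℝ) / 2 * pp (n - m / 2) ^ 2 : ℝ))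
    (S₀ : (Fin k → ℝ) → ℂ)
    (hS₀ : ContDiffOn ℝ (⊤ : ℕ∞) S₀ {ρ : Fin k → ℝ | ρ ⟨k - 1, by omega⟩ ≠ 0})
    (hHJ : ∀ r : Fin n → ℝ, get n r n ≠ 0 →
      ∑ j ∈ Finset.Icc (n - k + 1) n,
          (pp (2 * n - m + 1 - j) : ℂ) *
            fderiv ℝ S₀ (fun t : Fin k => get n r (n - k + 1 + (t : ℕ)))
              (evec k (j - (n - k))) +
        ∑ j ∈ Finset.Icc 1 k, (c j : ℂ) * (Vneg n j 1 (qe n m r) : ℝ) = ε')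
    (ψ : (Fin n → ℝ) → ℂ)
    (hψ : ψ = fun r : Fin n → ℝ =>
      Complex.exp (Complex.I * (S₀ (fun t : Fin k => get n r (n - k + 1 + (t : ℕ))) +
        ∑ j ∈ Finset.Icc 1 (n - k), (pp j : ℂ) * (get n r j : ℝ)))) :
    ∀ r : Fin n → ℝ, get n r n ≠ 0 →
      (Hneg n m k c ψ r = E * ψ r ∧
        ∀ j ∈ Finset.Icc 1 (n - k),
          -Complex.I * fderiv ℝ ψ r (evec n j) = (pp j : ℂ) * ψ r) := by
  -- ## Linear algebra setup
  set L : (Fin n → ℝ) →L[ℝ] (Fin k → ℝ) :=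
    ContinuousLinearMap.pi (fun t : Fin k =>
      ContinuousLinearMap.proj ⟨n - k + (t : ℕ), by have := t.isLt; omega⟩) with hLdef
  have hLapp : ∀ (w : Fin n → ℝ) (t : Fin k),
      L w t = w ⟨n - k + (t : ℕ), by have := t.isLt; omega⟩ := fun w t => rfl
  set P : (Fin n → ℝ) →L[ℝ] ℝ :=
    ∑ j ∈ (Finset.Icc 1 (n - k)).attach,
      pp j.1 • ContinuousLinearMap.proj (⟨j.1 - 1, by have h2 := (Finset.mem_Icc.mp j.2).2; have h1 := (Finset.mem_Icc.mp j.2).1; omega⟩ : Fin n) with hPdef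
  have hPapp : ∀ w : Fin n → ℝ, P w = ∑ j ∈ Finset.Icc 1 (n - k), pp j * get n w j := by
    intro w
    rw [hPdef]
    rw [← Finset.sum_attach (Finset.Icc 1 (n - k)) (fun j => pp j * get n w j)]
    rw [ContinuousLinearMap.sum_apply]
    refine Finset.sum_congr rfl fun j hj => ?_
    obtain ⟨h1, h2⟩ := Finset.mem_Icc.mp j.2
    simp only [ContinuousLinearMap.smul_apply, ContinuousLinearMap.proj_apply, smul_eq_mul]
    rw [get_eq _ h1 (by omega)]
  have hLr : ∀ w : Fin n → ℝ,
      (fun t : Fin k => get n w (n - k + 1 + (t : ℕ))) = L w := by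
    intro w; funext t
    have ht := t.isLt
    rw [hLapp w t, get_eq _ (by omega) (by omega)]
    refine congrArg w (Fin.ext ?_)
    show n - k + 1 + (t : ℕ) - 1 = n - k + (t : ℕ)
    omega
  have hLev0 : ∀ j : ℕ, j ≤ n - k → L (evec n j) = 0 := by
    intro j hj; funext t
    have ht := t.isLt
    rw [hLapp]
    simp only [evec, Pi.zero_apply]
    rw [if_neg (by omega)]
  have hLev1 : ∀ j : ℕ, n - k + 1 ≤ j → j ≤ n → L (evec n j) = evec k (j - (n - k)) := by
    intro j hj1 hj2; funext t
    have ht := t.isLt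
    rw [hLapp]
    simp only [evec]
    exact if_congr (by omega) rfl rfl
  have hPev : ∀ j : ℕ, 1 ≤ j → j ≤ n - k → P (evec n j) = pp j := by
    intro j h1 h2
    rw [hPapp]
    rw [Finset.sum_eq_single_of_mem j (Finset.mem_Icc.mpr ⟨h1, h2⟩)]
    · rw [get_eq _ h1 (by omega)]
      simp only [evec]
      rw [if_pos (by omega), mul_one]
    · intro b hb hbj
      obtain ⟨hb1, hb2⟩ := Finset.mem_Icc.mp hb
      rw [get_eq _ hb1 (by omega)]
      simp only [evec]
      rw [if_neg (by omega), mul_zero]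
  have hPev0 : ∀ j : ℕ, n - k + 1 ≤ j → P (evec n j) = 0 := by
    intro j hj
    rw [hPapp]
    refine Finset.sum_eq_zero fun b hb => ?_
    obtain ⟨hb1, hb2⟩ := Finset.mem_Icc.mp hb
    rw [get_eq _ hb1 (by omega)]
    simp only [evec]
    rw [if_neg (by omega), mul_zero]
  -- ## Topological setup
  set Ω : Set (Fin k → ℝ) := {ρ : Fin k → ℝ | ρ ⟨k - 1, by omega⟩ ≠ 0} with hΩdef
  have hS₀' : ContDiffOn ℝ (⊤ : ℕ∞) S₀ Ω := hS₀
  have hΩo : IsOpen Ω := by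
    have : Ω = (fun ρ : Fin k → ℝ => ρ ⟨k - 1, by omega⟩) ⁻¹' {(0:ℝ)}ᶜ := by
      ext ρ; simp [hΩdef]
    rw [this]
    exact isOpen_compl_singleton.preimage (continuous_apply _)
  have hmemΩ : ∀ w : Fin n → ℝ, get n w n ≠ 0 → L w ∈ Ω := by
    intro w hw
    show L w ⟨k - 1, by omega⟩ ≠ 0
    rw [hLapp]
    rw [get_eq _ (by omega) le_rfl] at hw
    convert hw using 2
    exact Fin.ext (by simp only [Fin.val_mk]; omega)
  have hUnh : ∀ w : Fin n → ℝ, get n w n ≠ 0 →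
      {y : Fin n → ℝ | get n y n ≠ 0} ∈ nhds w := by
    intro w hw
    have hUeq : {y : Fin n → ℝ | get n y n ≠ 0}
        = (fun y : Fin n → ℝ => y ⟨n - 1, by omega⟩) ⁻¹' {(0:ℝ)}ᶜ := by
      ext y
      simp [get_eq y (by omega : 1 ≤ n) le_rfl]
    rw [hUeq]
    refine (isOpen_compl_singleton.preimage (continuous_apply _)).mem_nhds ?_
    rw [get_eq _ (by omega) le_rfl] at hw
    exact hw
  -- ## The wave function
  have hψ' : ψ = fun w : Fin n → ℝ =>
      Complex.exp (Complex.I * (S₀ (L w) + ((P w : ℝ) : ℂ))) := by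
    rw [hψ]; funext w
    rw [hLr w,
      show (∑ j ∈ Finset.Icc 1 (n - k), (pp j : ℂ) * ((get n w j : ℝ) : ℂ))
          = ((P w : ℝ) : ℂ) from by rw [hPapp w]; push_cast; rfl]
  -- ## First derivative
  have hA : ∀ w : Fin n → ℝ, get n w n ≠ 0 →
      HasFDerivAt ψ ((Complex.I * ψ w) •
        ((fderiv ℝ S₀ (L w)).comp (L : (Fin n → ℝ) →L[ℝ] (Fin k → ℝ))
          + Complex.ofRealCLM.comp P)) w := by
    intro w hw
    have hdS : DifferentiableAt ℝ S₀ (L w) :=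
      (hS₀'.differentiableOn (by simp)).differentiableAt (hΩo.mem_nhds (hmemΩ w hw))
    have h1 : HasFDerivAt (fun y => S₀ (L y))
        ((fderiv ℝ S₀ (L w)).comp (L : (Fin n → ℝ) →L[ℝ] (Fin k → ℝ))) w :=
      hdS.hasFDerivAt.comp w L.hasFDerivAt
    have h2 : HasFDerivAt (fun y : Fin n → ℝ => ((P y : ℝ) : ℂ))
        (Complex.ofRealCLM.comp P) w :=
      Complex.ofRealCLM.hasFDerivAt.comp w P.hasFDerivAt
    have h3 := ((h1.add h2).const_mul Complex.I).cexp
    rw [hψ']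
    refine h3.congr_fderiv ?_
    rw [smul_smul]
    congr 1
    rw [mul_comm]
    rfl
  have hfd : ∀ w : Fin n → ℝ, get n w n ≠ 0 → ∀ v, fderiv ℝ ψ w v =
      Complex.I * ψ w * (fderiv ℝ S₀ (L w) (L v) + ((P v : ℝ) : ℂ)) := by
    intro w hw v
    rw [(hA w hw).fderiv]
    simp only [ContinuousLinearMap.smul_apply, ContinuousLinearMap.add_apply,
      ContinuousLinearMap.comp_apply, Complex.ofRealCLM_apply, smul_eq_mul]
  -- ## Second derivatives
  have hD2 : ∀ w : Fin n → ℝ, get n w n ≠ 0 → ∀ a b : ℕ,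
      L (evec n a) = 0 ∨ L (evec n b) = 0 →
      D2 n ψ w a b = -((fderiv ℝ S₀ (L w) (L (evec n a)) + ((P (evec n a) : ℝ) : ℂ)) *
        (fderiv ℝ S₀ (L w) (L (evec n b)) + ((P (evec n b) : ℝ) : ℂ))) * ψ w := by
    intro w hw a b hor
    have hev : (fun y => fderiv ℝ ψ y (evec n b)) =ᶠ[nhds w]
        (fun y => Complex.I * ψ y *
          (fderiv ℝ S₀ (L y) (L (evec n b)) + ((P (evec n b) : ℝ) : ℂ))) := by
      filter_upwards [hUnh w hw] with y hy
      exact hfd y hy (evec n b)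
    rw [D2, hev.fderiv_eq]
    rcases hor with ha | hb
    · have hD' : DifferentiableAt ℝ (fun q => fderiv ℝ S₀ q) (L w) :=
        ((hS₀'.fderiv_of_isOpen (m := 1) hΩo (by norm_cast)).differentiableOn
          one_ne_zero).differentiableAt (hΩo.mem_nhds (hmemΩ w hw))
      have hh : HasFDerivAt (fun y => fderiv ℝ S₀ (L y) (L (evec n b)))
          ((ContinuousLinearMap.apply ℝ ℂ (L (evec n b))).comp
            ((fderiv ℝ (fun q => fderiv ℝ S₀ q) (L w)).comp
              (L : (Fin n → ℝ) →L[ℝ] (Fin k → ℝ)))) w :=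
        (ContinuousLinearMap.apply ℝ ℂ (L (evec n b))).hasFDerivAt.comp w
          (hD'.hasFDerivAt.comp w L.hasFDerivAt)
      have hprod : HasFDerivAt (fun y => Complex.I * ψ y *
          (fderiv ℝ S₀ (L y) (L (evec n b)) + ((P (evec n b) : ℝ) : ℂ))) _ w :=
        ((hA w hw).const_mul Complex.I).mul
        (hh.add_const ((P (evec n b) : ℝ) : ℂ))
      rw [hprod.fderiv]
      simp only [ContinuousLinearMap.add_apply, ContinuousLinearMap.smul_apply,
        ContinuousLinearMap.comp_apply, ContinuousLinearMap.apply_apply,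
        Complex.ofRealCLM_apply, smul_eq_mul]
      rw [ha]
      simp only [map_zero, ContinuousLinearMap.zero_apply, zero_add]
      linear_combination (fderiv ℝ S₀ (L w) (L (evec n b)) + ((P (evec n b) : ℝ) : ℂ)) *
        ψ w * ((P (evec n a) : ℝ) : ℂ) * Complex.I_sq
    · have hfun : (fun y => Complex.I * ψ y *
          (fderiv ℝ S₀ (L y) (L (evec n b)) + ((P (evec n b) : ℝ) : ℂ)))
          = fun y => Complex.I * ψ y * ((P (evec n b) : ℝ) : ℂ) := by
        funext y; rw [hb, map_zero, zero_add]
      rw [hfun]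
      have hprod := ((hA w hw).const_mul Complex.I).mul_const ((P (evec n b) : ℝ) : ℂ)
      rw [hprod.fderiv]
      simp only [ContinuousLinearMap.add_apply, ContinuousLinearMap.smul_apply,
        ContinuousLinearMap.comp_apply, Complex.ofRealCLM_apply, smul_eq_mul]
      rw [hb]
      simp only [map_zero, zero_add]
      linear_combination (fderiv ℝ S₀ (L w) (L (evec n a)) + ((P (evec n a) : ℝ) : ℂ)) *
        ψ w * ((P (evec n b) : ℝ) : ℂ) * Complex.I_sq
  -- ## Main computation
  intro r hr
  constructor
  · -- the Schrödinger equation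
    set g : ℕ → ℂ :=
      fun j => fderiv ℝ S₀ (L r) (L (evec n j)) + ((P (evec n j) : ℝ) : ℂ) with hgdef
    have hD2' : ∀ a b : ℕ, L (evec n a) = 0 ∨ L (evec n b) = 0 →
        D2 n ψ r a b = -(g a * g b) * ψ r := fun a b hab => hD2 r hr a b hab
    have hgp : ∀ j : ℕ, 1 ≤ j → j ≤ n - k → g j = (pp j : ℂ) := by
      intro j h1 h2
      simp only [hgdef]
      rw [hLev0 j h2, map_zero, hPev j h1 h2, zero_add]
    have hgd : ∀ j : ℕ, n - k + 1 ≤ j → j ≤ n →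
        g j = fderiv ℝ S₀ (L r) (evec k (j - (n - k))) := by
      intro j h1 h2
      simp only [hgdef]
      rw [hLev1 j h1 h2, hPev0 j h1, Complex.ofReal_zero, add_zero]
    -- the first sum
    have e1 : ∑ a ∈ Finset.Icc 1 (n - m), D2 n ψ r a (n - m + 1 - a)
        = -(((∑ j ∈ Finset.Icc 1 (n - m), pp (n - m + 1 - j) * pp j : ℝ) : ℂ)) * ψ r := by
      have : ∀ a ∈ Finset.Icc 1 (n - m), D2 n ψ r a (n - m + 1 - a)
          = -(((pp (n - m + 1 - a) * pp a : ℝ) : ℂ)) * ψ r := by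
        intro a ha
        obtain ⟨h1, h2⟩ := Finset.mem_Icc.mp ha
        rw [hD2' a _ (Or.inl (hLev0 a (by omega))),
          hgp a h1 (by omega), hgp (n - m + 1 - a) (by omega) (by omega)]
        push_cast
        ring
      rw [Finset.sum_congr rfl this, ← Finset.sum_mul]
      push_cast
      rw [← Finset.sum_neg_distrib]
    -- the second sum
    have e2 : ∑ b ∈ Finset.Icc (n - m + 1) n, D2 n ψ r b (2 * n - m + 1 - b)
        = -(∑ b ∈ Finset.Icc (n - m + 1) n, g b * g (2 * n - m + 1 - b)) * ψ r := by
      have : ∀ b ∈ Finset.Icc (n - m + 1) n, D2 n ψ r b (2 * n - m + 1 - b)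
          = -(g b * g (2 * n - m + 1 - b)) * ψ r := by
        intro b hb
        obtain ⟨h1, h2⟩ := Finset.mem_Icc.mp hb
        rcases le_or_gt b (n - k) with hbk | hbk
        · exact hD2' b _ (Or.inl (hLev0 b hbk))
        · exact hD2' b _ (Or.inr (hLev0 (2 * n - m + 1 - b) (by omega)))
      rw [Finset.sum_congr rfl this, ← Finset.sum_mul, ← Finset.sum_neg_distrib]
    -- split the second sum in three pieces
    set f : ℕ → ℂ := fun b => g b * g (2 * n - m + 1 - b) with hfdef
    have hsplit : ∑ b ∈ Finset.Icc (n - m + 1) n, f b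
        = (∑ b ∈ Finset.Ioc (n - m) (n - m + k), f b)
          + (∑ b ∈ Finset.Ioc (n - m + k) (n - k), f b)
          + (∑ b ∈ Finset.Ioc (n - k) n, f b) := by
      rw [Finset.Icc_add_one_left_eq_Ioc,
        ← Finset.sum_Ioc_consecutive f (by omega : n - m ≤ n - k) (by omega : n - k ≤ n),
        ← Finset.sum_Ioc_consecutive f (by omega : n - m ≤ n - m + k)
          (by omega : n - m + k ≤ n - k)]
    -- third piece is the Hamilton–Jacobi sum
    have hHJr := hHJ r hr
    rw [hLr r] at hHJr
    have hC3 : ∑ b ∈ Finset.Ioc (n - k) n, f b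
        = ∑ j ∈ Finset.Icc (n - k + 1) n, (pp (2 * n - m + 1 - j) : ℂ) *
            fderiv ℝ S₀ (L r) (evec k (j - (n - k))) := by
      rw [Finset.Icc_add_one_left_eq_Ioc]
      refine Finset.sum_congr rfl fun j hj => ?_
      obtain ⟨h1, h2⟩ := Finset.mem_Ioc.mp hj
      simp only [hfdef]
      rw [hgd j (by omega) h2, hgp (2 * n - m + 1 - j) (by omega) (by omega), mul_comm]
    -- first piece equals third piece
    have hC1 : ∑ b ∈ Finset.Ioc (n - m) (n - m + k), f b
        = ∑ b ∈ Finset.Ioc (n - k) n, f b := by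
      refine Finset.sum_nbij' (fun j => 2 * n - m + 1 - j) (fun j => 2 * n - m + 1 - j)
        ?_ ?_ ?_ ?_ ?_
      · intro a ha
        obtain ⟨h1, h2⟩ := Finset.mem_Ioc.mp ha
        show 2 * n - m + 1 - a ∈ Finset.Ioc (n - k) n
        exact Finset.mem_Ioc.mpr ⟨by omega, by omega⟩
      · intro a ha
        obtain ⟨h1, h2⟩ := Finset.mem_Ioc.mp ha
        show 2 * n - m + 1 - a ∈ Finset.Ioc (n - m) (n - m + k)
        exact Finset.mem_Ioc.mpr ⟨by omega, by omega⟩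
      · intro a ha
        obtain ⟨h1, h2⟩ := Finset.mem_Ioc.mp ha
        show 2 * n - m + 1 - (2 * n - m + 1 - a) = a
        omega
      · intro a ha
        obtain ⟨h1, h2⟩ := Finset.mem_Ioc.mp ha
        show 2 * n - m + 1 - (2 * n - m + 1 - a) = a
        omega
      · intro a ha
        obtain ⟨h1, h2⟩ := Finset.mem_Ioc.mp ha
        show f a = f (2 * n - m + 1 - a)
        simp only [hfdef]
        rw [show 2 * n - m + 1 - (2 * n - m + 1 - a) = a from by omega]
        ring
    -- middle piece is a real sum
    have hC2 : ∑ b ∈ Finset.Ioc (n - m + k) (n - k), f b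
        = ((∑ b ∈ Finset.Ioc (n - m + k) (n - k), pp b * pp (2 * n - m + 1 - b) : ℝ) : ℂ) := by
      push_cast
      refine Finset.sum_congr rfl fun b hb => ?_
      obtain ⟨h1, h2⟩ := Finset.mem_Ioc.mp hb
      simp only [hfdef]
      rw [hgp b (by omega) h2, hgp (2 * n - m + 1 - b) (by omega) (by omega)]
    -- the real middle-sum identity
    have hmid : (∑ b ∈ Finset.Ioc (n - m + k) (n - k), pp b * pp (2 * n - m + 1 - b))
        = 2 * (∑ j ∈ Finset.Icc (n - m / 2 + 1) (n - k), pp j * pp (2 * n - m + 1 - j))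
          + ((m - 2 * (m / 2) : ℕ) : ℝ) * pp (n - m / 2) ^ 2 := by
      rw [Finset.Icc_add_one_left_eq_Ioc]
      rcases Nat.even_or_odd m with ⟨t, ht⟩ | ⟨t, ht⟩
      · have h2t : m / 2 = t := by omega
        have hz : m - 2 * (m / 2) = 0 := by omega
        rw [hz, h2t]
        rw [← Finset.sum_Ioc_consecutive (fun b => pp b * pp (2 * n - m + 1 - b))
          (by omega : n - m + k ≤ n - t) (by omega : n - t ≤ n - k)]
        have hrefl : ∑ b ∈ Finset.Ioc (n - m + k) (n - t), pp b * pp (2 * n - m + 1 - b)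
            = ∑ b ∈ Finset.Ioc (n - t) (n - k), pp b * pp (2 * n - m + 1 - b) := by
          refine Finset.sum_nbij' (fun j => 2 * n - m + 1 - j) (fun j => 2 * n - m + 1 - j)
            ?_ ?_ ?_ ?_ ?_
          · intro a ha
            obtain ⟨h1, h2⟩ := Finset.mem_Ioc.mp ha
            refine Finset.mem_Ioc.mpr ⟨?_, ?_⟩
            · show _ < 2 * n - m + 1 - a
              omega
            · show 2 * n - m + 1 - a ≤ _
              omega
          · intro a ha
            obtain ⟨h1, h2⟩ := Finset.mem_Ioc.mp ha
            refine Finset.mem_Ioc.mpr ⟨?_, ?_⟩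
            · show _ < 2 * n - m + 1 - a
              omega
            · show 2 * n - m + 1 - a ≤ _
              omega
          · intro a ha
            obtain ⟨h1, h2⟩ := Finset.mem_Ioc.mp ha
            show 2 * n - m + 1 - (2 * n - m + 1 - a) = a
            omega
          · intro a ha
            obtain ⟨h1, h2⟩ := Finset.mem_Ioc.mp ha
            show 2 * n - m + 1 - (2 * n - m + 1 - a) = a
            omega
          · intro a ha
            obtain ⟨h1, h2⟩ := Finset.mem_Ioc.mp ha
            show pp a * pp (2 * n - m + 1 - a)
              = pp (2 * n - m + 1 - a) * pp (2 * n - m + 1 - (2 * n - m + 1 - a))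
            rw [show 2 * n - m + 1 - (2 * n - m + 1 - a) = a from by omega]
            ring
        rw [hrefl]
        push_cast
        ring
      · have h2t : m / 2 = t := by omega
        have hz : m - 2 * (m / 2) = 1 := by omega
        rw [hz, h2t]
        have hkt : k ≤ t := by omega
        have hnt : 1 ≤ n - t := by omega
        rw [← Finset.sum_Ioc_consecutive (fun b => pp b * pp (2 * n - m + 1 - b))
          (by omega : n - m + k ≤ n - t) (by omega : n - t ≤ n - k),
          ← Finset.sum_Ioc_consecutive (fun b => pp b * pp (2 * n - m + 1 - b))
          (by omega : n - m + k ≤ n - t - 1) (by omega : n - t - 1 ≤ n - t)]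
        have hsing : Finset.Ioc (n - t - 1) (n - t) = {n - t} := by
          ext x
          simp only [Finset.mem_Ioc, Finset.mem_singleton]
          omega
        rw [hsing, Finset.sum_singleton,
          show 2 * n - m + 1 - (n - t) = n - t from by omega]
        have hrefl : ∑ b ∈ Finset.Ioc (n - m + k) (n - t - 1), pp b * pp (2 * n - m + 1 - b)
            = ∑ b ∈ Finset.Ioc (n - t) (n - k), pp b * pp (2 * n - m + 1 - b) := by
          refine Finset.sum_nbij' (fun j => 2 * n - m + 1 - j) (fun j => 2 * n - m + 1 - j)
            ?_ ?_ ?_ ?_ ?_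
          · intro a ha
            obtain ⟨h1, h2⟩ := Finset.mem_Ioc.mp ha
            refine Finset.mem_Ioc.mpr ⟨?_, ?_⟩
            · show _ < 2 * n - m + 1 - a
              omega
            · show 2 * n - m + 1 - a ≤ _
              omega
          · intro a ha
            obtain ⟨h1, h2⟩ := Finset.mem_Ioc.mp ha
            refine Finset.mem_Ioc.mpr ⟨?_, ?_⟩
            · show _ < 2 * n - m + 1 - a
              omega
            · show 2 * n - m + 1 - a ≤ _
              omega
          · intro a ha
            obtain ⟨h1, h2⟩ := Finset.mem_Ioc.mp ha
            show 2 * n - m + 1 - (2 * n - m + 1 - a) = a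
            omega
          · intro a ha
            obtain ⟨h1, h2⟩ := Finset.mem_Ioc.mp ha
            show 2 * n - m + 1 - (2 * n - m + 1 - a) = a
            omega
          · intro a ha
            obtain ⟨h1, h2⟩ := Finset.mem_Ioc.mp ha
            show pp a * pp (2 * n - m + 1 - a)
              = pp (2 * n - m + 1 - a) * pp (2 * n - m + 1 - (2 * n - m + 1 - a))
            rw [show 2 * n - m + 1 - (2 * n - m + 1 - a) = a from by omega]
            ring
        rw [hrefl]
        push_cast
        ring
    -- put everything together
    rw [Hneg, e1, e2, hsplit, hC1, hC2, hC3, hmid]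
    rw [hε'] at hHJr
    push_cast at hHJr ⊢
    linear_combination ψ r * hHJr
  · -- the momenta
    intro j hj
    obtain ⟨hj1, hj2⟩ := Finset.mem_Icc.mp hj
    rw [hfd r hr (evec n j), hLev0 j hj2, map_zero, hPev j hj1 hj2, zero_add]
    linear_combination (-(ψ r) * (pp j : ℂ)) * Complex.I_sq
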